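/- arXiv:1402.1063 — 2 statements merged into one kernel-verified Lean document; each statement's English description precedes it below -/
import Mathlib

section
/- Let X be a measurable subset of Cantor space such that for every x ∈ X and every i, flip(x,i) ∉ X (X contains no two sequences differing in exactly one coordinate). Then X has measure zero with respect to the coin-flipping measure. -/
open MeasureTheory Set Filter Topology Metric ENNReal

/-- The fair-coin (product Bernoulli(1/2)) measure on Cantor space, realized as the
pushforward of Lebesgue measure on [0,1) under the binary-digit map. -/
noncomputable def coin : Measure (ℕ → Bool) :=
  Measure.map (fun r n => decide (⌊r * 2 ^ (n + 1)⌋ % 2 = 1)) (volume.restrict (Set.Ico (0:ℝ) 1))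

/-- Flip the i-th bit of x. -/
def bitFlip (i : ℕ) (x : ℕ → Bool) : ℕ → Bool := Function.update x i (!x i)

/-- The basic cylinder of sequences extending the finite binary string s. -/
def cyl (s : List Bool) : Set (ℕ → Bool) := {x | ∀ k, k < s.length → x k = s.getD k false}

/-- x with its n-th bit deleted (later bits shifted left). -/
def del (n : ℕ) (x : ℕ → Bool) : ℕ → Bool := fun k => if k < n then x k else x (k + 1)

/-- x and y differ in only finitely many coordinates. -/
def FinDiff (x y : ℕ → Bool) : Prop := {n | x n ≠ y n}.Finite

lemma half_floor (u : ℝ) : ⌊u / 2⌋ = ⌊u⌋ / 2 := by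
  obtain ⟨q, r, hqr, hr⟩ : ∃ q r : ℤ, ⌊u⌋ = 2 * q + r ∧ (r = 0 ∨ r = 1) := ⟨⌊u⌋ / 2, ⌊u⌋ % 2, by omega, by omega⟩
  have h1 : (⌊u⌋ : ℝ) ≤ u := Int.floor_le u
  have h2 : u < ⌊u⌋ + 1 := Int.lt_floor_add_one u
  have : ⌊u / 2⌋ = q := by
    rw [Int.floor_eq_iff]
    constructor
    · push_cast
      rcases hr with h | h <;> rw [h] at hqr <;> rw [hqr] at h1 <;> push_cast at h1 <;> linarith
    · push_cast
      rcases hr with h | h <;> rw [h] at hqr <;> rw [hqr] at h2 <;> push_cast at h2 <;> linarith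
  omega

lemma floor_div_pow_congr (e : ℕ) {u v : ℝ} (huv : ⌊u⌋ = ⌊v⌋) : ⌊u / 2 ^ e⌋ = ⌊v / 2 ^ e⌋ := by
  induction e generalizing u v with
  | zero => simpa using huv
  | succ e ih =>
    have hu : u / 2 ^ (e + 1) = (u / 2) / 2 ^ e := by ring
    have hv : v / 2 ^ (e + 1) = (v / 2) / 2 ^ e := by ring
    rw [hu, hv]
    exact ih (by rw [half_floor, half_floor, huv])



lemma key_flip (n : ℕ) (m : ℤ) (r : ℝ) (hr : ⌊r * 2 ^ (n + 1)⌋ = 2 * m) :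
    (fun k => decide (⌊(r + ((2:ℝ) ^ (n + 1))⁻¹) * 2 ^ (k + 1)⌋ % 2 = 1)) =
      bitFlip n (fun k => decide (⌊r * 2 ^ (k + 1)⌋ % 2 = 1)) := by
  funext k
  have h2 : ((2:ℝ) ^ (n + 1)) ≠ 0 := by positivity
  simp only [bitFlip, Function.update_apply]
  rcases lt_trichotomy k n with hk | hk | hk
  · -- k < n
    rw [if_neg (by omega)]
    set e := n - k with he
    have hkn : n + 1 = (k + 1) + e := by omega
    have he1 : 1 ≤ e := by omega
    have hu : (r + ((2:ℝ) ^ (n + 1))⁻¹) * 2 ^ (k + 1) = (r * 2 ^ (n + 1) + 1) / 2 ^ e := by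
      rw [hkn]; field_simp; ring
    have hv : r * 2 ^ (k + 1) = (r * 2 ^ (n + 1)) / 2 ^ e := by
      rw [hkn]; field_simp; ring
    rw [hu, hv]
    have hee : (2:ℝ) ^ e = 2 ^ (e - 1 + 1) := by rw [Nat.sub_add_cancel he1]
    have hu2 : (r * 2 ^ (n + 1) + 1) / 2 ^ e = ((r * 2 ^ (n + 1) + 1) / 2) / 2 ^ (e - 1) := by
      rw [hee]; ring
    have hv2 : (r * 2 ^ (n + 1)) / 2 ^ e = ((r * 2 ^ (n + 1)) / 2) / 2 ^ (e - 1) := by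
      rw [hee]; ring
    rw [hu2, hv2]
    have hfl : ⌊(r * 2 ^ (n + 1) + 1) / 2⌋ = ⌊(r * 2 ^ (n + 1)) / 2⌋ := by
      rw [half_floor, half_floor]
      have : r * 2 ^ (n + 1) + 1 = r * 2 ^ (n + 1) + (1 : ℤ) := by push_cast; ring
      rw [this, Int.floor_add_intCast, hr]
      omega
    rw [floor_div_pow_congr (e - 1) hfl]
  · -- k = n
    subst hk
    rw [if_pos rfl]
    have : (r + ((2:ℝ) ^ (k + 1))⁻¹) * 2 ^ (k + 1) = r * 2 ^ (k + 1) + (1 : ℤ) := by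
      push_cast; field_simp
    rw [this, Int.floor_add_intCast, hr]
    rw [show (2 * m + 1) % 2 = 1 by omega, show (2 * m) % 2 = 0 by omega]
    simp
  · -- k > n
    rw [if_neg (by omega)]
    set j := k - n with hj
    have hj1 : 1 ≤ j := by omega
    have hkn : k + 1 = (n + 1) + j := by omega
    have : (r + ((2:ℝ) ^ (n + 1))⁻¹) * 2 ^ (k + 1) = r * 2 ^ (k + 1) + ((2 ^ j : ℤ) : ℝ) := by
      rw [hkn]; push_cast; field_simp; ring
    rw [this, Int.floor_add_intCast]
    obtain ⟨t, ht⟩ : (2:ℤ) ∣ 2 ^ j := dvd_pow_self 2 (by omega)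
    rw [decide_eq_decide]
    omega




theorem null_of_no_one_bit_difference (X : Set (ℕ → Bool)) (hX : MeasurableSet X)
    (h : ∀ x ∈ X, ∀ i : ℕ, bitFlip i x ∉ X) : coin X = 0 := by
  classical
  set f : ℝ → ℕ → Bool := fun r n => decide (⌊r * 2 ^ (n + 1)⌋ % 2 = 1) with hfdef
  have hf : Measurable f := by
    apply measurable_pi_lambda
    intro k
    exact Measurable.comp (measurable_from_top : Measurable fun z : ℤ => decide (z % 2 = 1))
      (Int.measurable_floor.comp (measurable_mul_const ((2:ℝ) ^ (k + 1))))
  have hcoin : coin X = volume (f ⁻¹' X ∩ Ico (0:ℝ) 1) := by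
    rw [coin, Measure.map_apply hf hX, Measure.restrict_apply (hf hX)]
  set A : Set ℝ := f ⁻¹' X ∩ Ico (0:ℝ) 1 with hAdef
  have hA : MeasurableSet A := (hf hX).inter measurableSet_Ico
  rw [hcoin]
  by_contra hne
  -- density point
  have hres : (volume.restrict A) ≠ 0 := by
    rw [← Measure.measure_univ_ne_zero, Measure.restrict_apply_univ]
    exact hne
  haveI := ae_neBot.2 hres
  have hd := Besicovitch.ae_tendsto_measure_inter_div (volume : Measure ℝ) A
  have hmem : ∀ᵐ x ∂volume.restrict A, x ∈ A := ae_restrict_mem hA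
  obtain ⟨a, hda, haA⟩ := (hd.and hmem).exists
  -- choose n with good density at scale 2⁻ⁿ
  have h2n : Tendsto (fun n : ℕ => ((2:ℝ) ^ n)⁻¹) atTop (𝓝[>] (0:ℝ)) := by
    apply tendsto_nhdsWithin_of_tendsto_nhds_of_eventually_within
    · have := tendsto_pow_atTop_nhds_zero_of_lt_one (by norm_num : (0:ℝ) ≤ 1/2) (by norm_num : (1/2:ℝ) < 1)
      simpa [one_div, inv_pow] using this
    · filter_upwards with n
      have : (0:ℝ) < ((2:ℝ) ^ n)⁻¹ := by positivity
      exact this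
  have hev := (hda.comp h2n).eventually (lt_mem_nhds (by rw [ENNReal.div_lt_iff (Or.inl (by norm_num)) (Or.inl (by norm_num))]; norm_num : (3/4 : ℝ≥0∞) < 1))
  obtain ⟨n, hn⟩ := hev.exists
  simp only [Function.comp] at hn
  set ℓ : ℝ := ((2:ℝ) ^ n)⁻¹ with hℓdef
  have hℓ : 0 < ℓ := by positivity
  have h2n0 : ((2:ℝ) ^ n) ≠ 0 := by positivity
  set m : ℤ := ⌊a * 2 ^ n⌋ with hmdef
  set c : ℝ := m * ℓ with hcdef
  have hkey : (2:ℝ) ^ n * ℓ = 1 := mul_inv_cancel₀ h2n0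
  have haI : c ≤ a ∧ a < c + ℓ := by
    have h1 : (m:ℝ) ≤ a * 2 ^ n := Int.floor_le _
    have h2 : a * 2 ^ n < m + 1 := Int.lt_floor_add_one _
    have e1 := mul_le_mul_of_nonneg_right h1 hℓ.le
    have e2 := mul_lt_mul_of_pos_right h2 hℓ
    have e3 : a * 2 ^ n * ℓ = a := by rw [mul_assoc, hkey, mul_one]
    constructor
    · nlinarith
    · nlinarith
  -- relate ratio to measures
  have hB : volume (closedBall a ℓ) = ENNReal.ofReal (2 * ℓ) := Real.volume_closedBall a ℓ
  have hB0 : volume (closedBall a ℓ) ≠ 0 := by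
    rw [hB]; simp [ENNReal.ofReal_eq_zero]; linarith
  have hBt : volume (closedBall a ℓ) ≠ ∞ := by rw [hB]; exact ENNReal.ofReal_ne_top
  have hAB : (3/4 : ℝ≥0∞) * volume (closedBall a ℓ) < volume (A ∩ closedBall a ℓ) :=
    (ENNReal.lt_div_iff_mul_lt (Or.inl hB0) (Or.inl hBt)).mp hn
  have hAB' : ENNReal.ofReal (3/2 * ℓ) < volume (A ∩ closedBall a ℓ) := by
    refine lt_of_le_of_lt (le_of_eq ?_) hAB
    rw [hB, show (3/4 : ℝ≥0∞) = ENNReal.ofReal (3/4) by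
      rw [ENNReal.ofReal_div_of_pos (by norm_num)]; norm_num,
      ← ENNReal.ofReal_mul (by norm_num)]
    congr 1; ring
  set I : Set ℝ := Ico c (c + ℓ) with hIdef
  have hIB : I ⊆ closedBall a ℓ := by
    intro t ht
    rw [Real.closedBall_eq_Icc]
    obtain ⟨ht1, ht2⟩ := ht
    constructor <;> [linarith [haI.2]; linarith [haI.1]]
  have hBI : volume (closedBall a ℓ \ I) = ENNReal.ofReal ℓ := by
    rw [measure_diff hIB measurableSet_Ico.nullMeasurableSet
      (lt_of_le_of_lt (measure_mono hIB) (by rw [hB]; exact ENNReal.ofReal_lt_top)).ne,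
      hB, Real.volume_Ico, show c + ℓ - c = ℓ by ring,
      ← ENNReal.ofReal_sub _ hℓ.le, show 2 * ℓ - ℓ = ℓ by ring]
  have hsplit : volume (A ∩ closedBall a ℓ) ≤ volume (A ∩ I) + ENNReal.ofReal ℓ := by
    rw [← hBI]
    refine le_trans (measure_mono ?_) (measure_union_le _ _)
    rintro t ⟨htA, htB⟩
    by_cases htI : t ∈ I
    · exact Or.inl ⟨htA, htI⟩
    · exact Or.inr ⟨htB, htI⟩
  have hAI : ENNReal.ofReal (ℓ/2) < volume (A ∩ I) := by
    have hlt : ENNReal.ofReal (ℓ/2) + ENNReal.ofReal ℓ < volume (A ∩ I) + ENNReal.ofReal ℓ := by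
      refine lt_of_lt_of_le ?_ hsplit
      refine lt_of_le_of_lt (le_of_eq ?_) hAB'
      rw [← ENNReal.ofReal_add (by linarith) hℓ.le]
      congr 1; ring
    exact (ENNReal.add_lt_add_iff_right ENNReal.ofReal_ne_top).mp hlt
  -- flip argument
  have hh : ℓ / 2 = ((2:ℝ) ^ (n + 1))⁻¹ := by
    rw [hℓdef, pow_succ]
    field_simp
  set I0 : Set ℝ := Ico c (c + ℓ/2) with hI0def
  set I1 : Set ℝ := Ico (c + ℓ/2) (c + ℓ) with hI1def
  have hflip : ∀ r ∈ I0, f (r + ℓ/2) = bitFlip n (f r) := by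
    intro r hr
    obtain ⟨hr1, hr2⟩ := hr
    have hfl : ⌊r * 2 ^ (n + 1)⌋ = 2 * m := by
      have hP : (0:ℝ) < 2 ^ (n + 1) := by positivity
      have e0 : ℓ * 2 ^ (n + 1) = 2 := by
        rw [hℓdef, pow_succ]; field_simp
      have ec : c * 2 ^ (n + 1) = 2 * m := by
        rw [hcdef, mul_assoc, e0]; ring
      have e1 := mul_le_mul_of_nonneg_right hr1 hP.le
      have e2 := mul_lt_mul_of_pos_right hr2 hP
      have e3 : (c + ℓ / 2) * 2 ^ (n + 1) = 2 * m + 1 := by linear_combination ec + e0 / 2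
      rw [Int.floor_eq_iff]
      constructor
      · push_cast; linarith
      · push_cast; linarith
    rw [hh]
    exact key_flip n m r hfl
  have hS_meas : MeasurableSet ((fun r => r + ℓ/2) ⁻¹' (A ∩ I1)) :=
    (measurable_add_const (ℓ/2)) (hA.inter measurableSet_Ico)
  have hSvol : volume ((fun r => r + ℓ/2) ⁻¹' (A ∩ I1)) = volume (A ∩ I1) :=
    measure_preimage_add_right volume (ℓ/2) _
  have hSsub : (fun r => r + ℓ/2) ⁻¹' (A ∩ I1) ⊆ I0 := by
    rintro r ⟨_, hr1, hr2⟩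
    exact ⟨by linarith, by linarith⟩
  have hdisj : Disjoint (A ∩ I0) ((fun r => r + ℓ/2) ⁻¹' (A ∩ I1)) := by
    rw [Set.disjoint_left]
    rintro r ⟨hrA, hrI0⟩ ⟨hrA2, _⟩
    have h1 : f r ∈ X := hrA.1
    have h2 : f (r + ℓ/2) ∈ X := hrA2.1
    rw [hflip r hrI0] at h2
    exact h (f r) h1 n h2
  have hfinal : volume (A ∩ I) ≤ ENNReal.ofReal (ℓ/2) := by
    have hcup : A ∩ I ⊆ (A ∩ I0) ∪ (A ∩ I1) := by
      rintro t ⟨htA, ht1, ht2⟩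
      by_cases htc : t < c + ℓ/2
      · exact Or.inl ⟨htA, ht1, htc⟩
      · exact Or.inr ⟨htA, not_lt.mp htc, ht2⟩
    calc volume (A ∩ I) ≤ volume (A ∩ I0) + volume (A ∩ I1) :=
          le_trans (measure_mono hcup) (measure_union_le _ _)
      _ = volume ((A ∩ I0) ∪ (fun r => r + ℓ/2) ⁻¹' (A ∩ I1)) := by
          rw [measure_union hdisj hS_meas, hSvol]
      _ ≤ volume I0 := measure_mono (union_subset (inter_subset_right) hSsub)
      _ = ENNReal.ofReal (ℓ/2) := by rw [hI0def, Real.volume_Ico]; congr 1; ring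
  exact absurd (lt_of_lt_of_le hAI hfinal) (lt_irrefl _)
end

section
/- Let X be a subset of Cantor space with the Baire property such that for every x ∈ X and every i, flip(x,i) ∉ X. Then X is meager. -/
/-!
If `X` is Baire measurable and not meagre, it is comeagre in some nonempty open set, and
shrinking that set we may take it to be a cylinder `V` fixing finitely many coordinates. Flipping
a bit `i` outside those coordinates is a homeomorphism mapping `V` to itself, so `V` is also
comeagre in the flipped copy of `X`. But the hypothesis says `X` and its flip are disjoint, so `V`
would be covered by two meagre sets, contradicting the Baire category theorem.
-/

open MeasureTheory Set Filter

open Topology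

section Baire

variable {α : Type*} [TopologicalSpace α] {s t : Set α}

theorem isMeagre_diff_of_residualEq (h : s =ᵇ t) : IsMeagre (t \ s) :=
  (eventuallyEq_set.1 h).mono fun _ hx hxts => hxts.2 (hx.2 hxts.1)

theorem BaireMeasurableSet.exists_isOpen_isMeagre_diff (hs : BaireMeasurableSet s)
    (hs' : ¬IsMeagre s) : ∃ U, IsOpen U ∧ U.Nonempty ∧ IsMeagre (U \ s) := by
  obtain ⟨U, hU, hsU⟩ := hs.residualEq_isOpen
  refine ⟨U, hU, nonempty_iff_ne_empty.2 ?_, isMeagre_diff_of_residualEq hsU⟩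
  rintro rfl
  exact hs' (by simpa using isMeagre_diff_of_residualEq hsU.symm)

theorem not_isMeagre_diff_of_disjoint_preimage [BaireSpace α] (f : α ≃ₜ α) {V : Set α}
    (hV : IsOpen V) (hVne : V.Nonempty) (hfV : MapsTo f V V) (hs : Disjoint s (f ⁻¹' s)) :
    ¬IsMeagre (V \ s) := by
  intro hVs
  have hcover : V ⊆ (V \ s) ∪ f ⁻¹' (V \ s) := fun y hy => by
    by_cases hys : y ∈ s
    · exact Or.inr ⟨hfV hy, disjoint_left.1 hs hys⟩
    · exact Or.inl ⟨hy, hys⟩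
  exact not_isMeagre_of_isOpen hV hVne <|
    (hVs.union (hVs.preimage_of_isOpenMap f.continuous f.isOpenMap)).mono hcover

end Baire

section BitFlip

theorem bitFlip_apply_of_ne {i k : ℕ} (hk : k ≠ i) (x : ℕ → Bool) : bitFlip i x k = x k :=
  Function.update_of_ne hk _ _

theorem bitFlip_involutive (i : ℕ) : Function.Involutive (bitFlip i) := fun x => by
  funext k
  rcases eq_or_ne k i with rfl | hk
  · simp [bitFlip]
  · simp only [bitFlip_apply_of_ne hk]

theorem continuous_bitFlip (i : ℕ) : Continuous (bitFlip i) :=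
  continuous_id.update i ((continuous_of_discreteTopology (f := not)).comp (continuous_apply i))

def bitFlipHomeomorph (i : ℕ) : (ℕ → Bool) ≃ₜ (ℕ → Bool) where
  toEquiv := (bitFlip_involutive i).toPerm
  continuous_toFun := continuous_bitFlip i
  continuous_invFun := continuous_bitFlip i

theorem exists_subset_isOpen_mapsTo_bitFlip {U : Set (ℕ → Bool)} (hU : IsOpen U)
    (hUne : U.Nonempty) : ∃ i, ∃ V ⊆ U, IsOpen V ∧ V.Nonempty ∧ MapsTo (bitFlip i) V V := by
  obtain ⟨x, hx⟩ := hUne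
  obtain ⟨I, u, hu, hIu⟩ := isOpen_pi_iff.1 hU x hx
  obtain ⟨i, hi⟩ := Infinite.exists_notMem_finset I
  refine ⟨i, (I : Set ℕ).pi fun k => {x k}, ?_, ?_, ⟨x, fun k _ => rfl⟩, ?_⟩
  · exact (pi_mono fun k hk => singleton_subset_iff.2 (hu k hk).2).trans hIu
  · exact isOpen_set_pi I.finite_toSet fun _ _ => isOpen_discrete _
  · intro y hy k hk
    rw [mem_singleton_iff, bitFlip_apply_of_ne (ne_of_mem_of_not_mem hk hi)]
    exact hy k hk

end BitFlip

theorem meagre_of_no_one_bit_difference (X : Set (ℕ → Bool)) (hX : BaireMeasurableSet X)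
    (h : ∀ x ∈ X, ∀ i : ℕ, bitFlip i x ∉ X) : IsMeagre X := by
  by_contra hX'
  obtain ⟨U, hU, hUne, hUX⟩ := hX.exists_isOpen_isMeagre_diff hX'
  obtain ⟨i, V, hVU, hV, hVne, hVi⟩ := exists_subset_isOpen_mapsTo_bitFlip hU hUne
  exact not_isMeagre_diff_of_disjoint_preimage (bitFlipHomeomorph i) hV hVne hVi
    (disjoint_left.2 fun x hx => h x hx i) (hUX.mono (sdiff_subset_sdiff_left hVU))
end
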